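/- In a generalized Łukasiewicz ring R, every prime (two-sided) ideal is maximal. -/
import Mathlib


variable {R : Type*} [NonUnitalRing R]

/-- The right annihilator of a two-sided ideal: `I⁻ = {x : ∀ a ∈ I, a * x = 0}`. -/
def annR (I : TwoSidedIdeal R) : TwoSidedIdeal R :=
  TwoSidedIdeal.mk' {x : R | ∀ a ∈ I, a * x = 0}
    (fun a _ => mul_zero a)
    (fun {x y} hx hy a ha => by rw [mul_add, hx a ha, hy a ha, add_zero])
    (fun {x} hx a ha => by rw [mul_neg, hx a ha, neg_zero])
    (fun {x y} hy a ha => by rw [← mul_assoc]; exact hy _ (I.mul_mem_right a x ha))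
    (fun {x y} hx a ha => by rw [← mul_assoc, hx a ha, zero_mul])

/-- The left annihilator of a two-sided ideal: `I∼ = {x : ∀ a ∈ I, x * a = 0}`. -/
def annL (I : TwoSidedIdeal R) : TwoSidedIdeal R :=
  TwoSidedIdeal.mk' {x : R | ∀ a ∈ I, x * a = 0}
    (fun a _ => zero_mul a)
    (fun {x y} hx hy a ha => by rw [add_mul, hx a ha, hy a ha, add_zero])
    (fun {x} hx a ha => by rw [neg_mul, hx a ha, neg_zero])
    (fun {x y} hy a ha => by rw [mul_assoc, hy a ha, mul_zero])
    (fun {x y} hx a ha => by rw [mul_assoc]; exact hx _ (I.mul_mem_left y a ha))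

/-- The product of two two-sided ideals: the ideal generated by `{a * b : a ∈ I, b ∈ J}`. -/
def prodI (I J : TwoSidedIdeal R) : TwoSidedIdeal R :=
  sInf {K : TwoSidedIdeal R | ∀ a ∈ I, ∀ b ∈ J, a * b ∈ K}

/-- A generalized Łukasiewicz ring: generated by central idempotents and satisfying
(AN) `I⁻ = I∼`, (CO) `I·J = J·I`, (LR) `I + J = (I*·(I*·J)*)*` for all two-sided ideals. -/
def IsGLR (R : Type*) [NonUnitalRing R] : Prop :=
  (∀ x : R, ∃ e : R, IsIdempotentElem e ∧ e ∈ Set.center R ∧ e * x = x) ∧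
  (∀ I : TwoSidedIdeal R, annR I = annL I) ∧
  (∀ I J : TwoSidedIdeal R, prodI I J = prodI J I) ∧
  (∀ I J : TwoSidedIdeal R,
    I ⊔ J = annR (prodI (annR I) (annR (prodI (annR I) J))))

namespace GLRaux

lemma mem_annR {I : TwoSidedIdeal R} {x : R} : x ∈ annR I ↔ ∀ a ∈ I, a * x = 0 :=
  TwoSidedIdeal.mem_mk' _ _ _ _ _ _ x

lemma mem_annL {I : TwoSidedIdeal R} {x : R} : x ∈ annL I ↔ ∀ a ∈ I, x * a = 0 :=
  TwoSidedIdeal.mem_mk' _ _ _ _ _ _ x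

lemma mul_mem_prodI {I J : TwoSidedIdeal R} {a b : R} (ha : a ∈ I) (hb : b ∈ J) :
    a * b ∈ prodI I J :=
  (TwoSidedIdeal.mem_sInf _).mpr fun _ hK => hK a ha b hb

lemma prodI_le {I J K : TwoSidedIdeal R} (h : ∀ a ∈ I, ∀ b ∈ J, a * b ∈ K) :
    prodI I J ≤ K :=
  sInf_le h

lemma prodI_le_left {I J : TwoSidedIdeal R} : prodI I J ≤ I :=
  prodI_le fun a ha b _ => I.mul_mem_right a b ha

lemma prodI_le_right {I J : TwoSidedIdeal R} : prodI I J ≤ J :=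
  prodI_le fun a _ b hb => J.mul_mem_left a b hb

lemma prodI_mono_left {I I' J : TwoSidedIdeal R} (h : I ≤ I') : prodI I J ≤ prodI I' J :=
  prodI_le fun a ha b hb => mul_mem_prodI (h ha) hb

lemma annR_antitone {I J : TwoSidedIdeal R} (h : I ≤ J) : annR J ≤ annR I :=
  fun _ hx => mem_annR.mpr fun a ha => mem_annR.mp hx a (h ha)

lemma prodI_annR_self {I : TwoSidedIdeal R} : prodI I (annR I) = ⊥ :=
  le_bot_iff.mp <| prodI_le fun a ha b hb =>
    (TwoSidedIdeal.mem_bot _).mpr (mem_annR.mp hb a ha)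

lemma annR_bot : annR (⊥ : TwoSidedIdeal R) = ⊤ :=
  eq_top_iff.mpr fun x _ => mem_annR.mpr fun a ha => by
    rw [(TwoSidedIdeal.mem_bot _).mp ha, zero_mul]

lemma prodI_assoc (I J K : TwoSidedIdeal R) :
    prodI (prodI I J) K = prodI I (prodI J K) := by
  apply le_antisymm
  · set M := prodI I (prodI J K) with hM
    set T : TwoSidedIdeal R := TwoSidedIdeal.mk' {t : R | ∀ c ∈ K, t * c ∈ M}
      (fun c _ => by rw [zero_mul]; exact M.zero_mem)
      (fun {x y} hx hy c hc => by rw [add_mul]; exact M.add_mem (hx c hc) (hy c hc))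
      (fun {x} hx c hc => by rw [neg_mul]; exact M.neg_mem (hx c hc))
      (fun {x y} hy c hc => by rw [mul_assoc]; exact M.mul_mem_left x _ (hy c hc))
      (fun {x y} hx c hc => by rw [mul_assoc]; exact hx _ (K.mul_mem_left y c hc)) with hT
    have h1 : prodI I J ≤ T := prodI_le fun a ha b hb => by
      rw [hT, TwoSidedIdeal.mem_mk']
      intro c hc
      rw [mul_assoc]
      exact mul_mem_prodI ha (mul_mem_prodI hb hc)
    exact prodI_le fun t ht c hc => by
      have := h1 ht
      rw [hT, TwoSidedIdeal.mem_mk'] at this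
      exact this c hc
  · set N := prodI (prodI I J) K with hN
    set T : TwoSidedIdeal R := TwoSidedIdeal.mk' {s : R | ∀ a ∈ I, a * s ∈ N}
      (fun a _ => by rw [mul_zero]; exact N.zero_mem)
      (fun {x y} hx hy a ha => by rw [mul_add]; exact N.add_mem (hx a ha) (hy a ha))
      (fun {x} hx a ha => by rw [mul_neg]; exact N.neg_mem (hx a ha))
      (fun {x y} hy a ha => by rw [← mul_assoc]; exact hy _ (I.mul_mem_right a x ha))
      (fun {x y} hx a ha => by rw [← mul_assoc]; exact N.mul_mem_right _ y (hx a ha)) with hT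
    have h1 : prodI J K ≤ T := prodI_le fun b hb c hc => by
      rw [hT, TwoSidedIdeal.mem_mk']
      intro a ha
      rw [← mul_assoc]
      exact mul_mem_prodI (mul_mem_prodI ha hb) hc
    exact prodI_le fun a ha s hs => by
      have := h1 hs
      rw [hT, TwoSidedIdeal.mem_mk'] at this
      exact this a ha

end GLRaux

open GLRaux in
/-- In a generalized Łukasiewicz ring, every prime two-sided ideal is maximal. -/
theorem IsGLR.prime_is_maximal {R : Type*} [NonUnitalRing R] (hR : IsGLR R)
    (P : TwoSidedIdeal R) (hP : P ≠ ⊤)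
    (hprime : ∀ I J : TwoSidedIdeal R, prodI I J ≤ P → I ≤ P ∨ J ≤ P) :
    IsCoatom P := by
  obtain ⟨hgen, hAN, hCO, hLR⟩ := hR
  -- `prodI I ⊤ = I`, using central idempotents
  have prodI_top : ∀ I : TwoSidedIdeal R, prodI I ⊤ = I := by
    intro I
    refine le_antisymm prodI_le_left fun x hx => ?_
    obtain ⟨e, _, hc, he⟩ := hgen x
    have hxe : x * e = x := by rw [← hc.comm x, he]
    exact hxe ▸ mul_mem_prodI hx (TwoSidedIdeal.mem_top _)
  -- `I* · I = 0` (uses AN)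
  have prodI_ann_self : ∀ I : TwoSidedIdeal R, prodI (annR I) I = ⊥ := by
    intro I
    refine le_bot_iff.mp <| prodI_le fun a ha b hb => ?_
    rw [hAN I] at ha
    exact (TwoSidedIdeal.mem_bot _).mpr (mem_annL.mp ha b hb)
  -- the double annihilator theorem: `I** = I`
  have hDD : ∀ I : TwoSidedIdeal R, annR (annR I) = I := by
    intro I
    have := hLR I I
    rw [sup_idem, prodI_ann_self I, annR_bot, prodI_top] at this
    exact this.symm
  -- annihilator flip: `prodI X Y = ⊥ → X ≤ annR Y`
  have hflip : ∀ X Y : TwoSidedIdeal R, prodI X Y = ⊥ → X ≤ annR Y := by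
    intro X Y h x hx
    rw [hAN Y]
    exact mem_annL.mpr fun b hb => (TwoSidedIdeal.mem_bot _).mp (h ▸ mul_mem_prodI hx hb)
  set m := annR P with hm
  -- the key dichotomy: for every ideal `U`, `U·P*` is `⊥` or `P*`.
  have hdich : ∀ U : TwoSidedIdeal R, prodI U m = ⊥ ∨ prodI U m = m := by
    intro U
    set V := prodI U m with hV
    have key : prodI (prodI U (annR V)) m = ⊥ := by
      rw [prodI_assoc, hCO (annR V) m, ← prodI_assoc, ← hV, prodI_annR_self]
    have hUP : prodI U (annR V) ≤ P := by
      have := hflip _ _ key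
      rwa [hm, hDD P] at this
    rcases hprime _ _ hUP with hU | hV'
    · left
      refine le_bot_iff.mp ?_
      calc prodI U m ≤ prodI P m := prodI_mono_left hU
      _ = ⊥ := by rw [hm, prodI_annR_self]
    · right
      refine le_antisymm prodI_le_right ?_
      have := annR_antitone hV'
      rwa [hDD V, ← hm] at this
  constructor
  · exact hP
  · intro Q hQ
    have hq := hLR P Q
    rw [sup_eq_right.mpr hQ.le, ← hm] at hq
    have hc : annR Q = prodI m (annR (prodI m Q)) := by
      have := congrArg annR hq
      rwa [hDD] at this
    rcases hdich (annR (prodI m Q)) with h0 | hmm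
    · rw [hCO] at h0
      have : annR Q = ⊥ := by rw [hc, h0]
      have := congrArg annR this
      rwa [hDD, annR_bot] at this
    · rw [hCO] at hmm
      have : annR Q = m := by rw [hc, hmm]
      have := congrArg annR this
      rw [hDD, hm, hDD] at this
      exact absurd this.symm hQ.ne
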